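/- arXiv:1708.06087 — 13 statements merged into one kernel-verified Lean document; each statement's English description precedes it below -/
import Mathlib

section
/- Let m ≥ 2 and n ≥ 1, and let φ : Fin m → Fin n be a monotone map with φ(0) = 0, with right adjoint φ* : Fin n → Fin m. Then φ* itself has a right adjoint φ_* : Fin m → Fin n (i.e. a monotone map with φ*(j) ≤ i ↔ j ≤ φ_*(i) for all i, j) if and only if φ(1) ≠ 0. Moreover, in that case φ_* is given explicitly by: φ_*(i) = φ(i+1) − 1 if i + 1 < m and φ(i) < φ(i+1); φ_*(i) = φ(i) − 1 if i + 1 < m and φ(i) = φ(i+1); and φ_*(m−1) = n−1. -/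
/-- existence and explicit description of the second right adjoint. -/
theorem stmt0 {m n : ℕ} (hm : 2 ≤ m) (hn : 1 ≤ n)
    (φ : Fin m → Fin n) (hφ : Monotone φ)
    (h0 : φ ⟨0, by omega⟩ = ⟨0, by omega⟩)
    (ψ : Fin n → Fin m) (hψ : ∀ i j, φ i ≤ j ↔ i ≤ ψ j) :
    ((∃ χ : Fin m → Fin n, Monotone χ ∧ ∀ j i, ψ j ≤ i ↔ j ≤ χ i) ↔
      φ ⟨1, by omega⟩ ≠ ⟨0, by omega⟩) ∧
    (∀ χ : Fin m → Fin n, Monotone χ → (∀ j i, ψ j ≤ i ↔ j ≤ χ i) →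
      ∀ i : Fin m,
        (∀ h : (i : ℕ) + 1 < m,
          (φ i < φ ⟨(i : ℕ) + 1, h⟩ → (χ i : ℕ) = (φ ⟨(i : ℕ) + 1, h⟩ : ℕ) - 1) ∧
          (φ i = φ ⟨(i : ℕ) + 1, h⟩ → (χ i : ℕ) = (φ i : ℕ) - 1)) ∧
        ((i : ℕ) = m - 1 → (χ i : ℕ) = n - 1)) := by
  have hψφ : ∀ j, φ (ψ j) ≤ j := fun j => (hψ (ψ j) j).mpr le_rfl
  have hψmono : Monotone ψ := fun j j' hj => (hψ _ _).mp ((hψφ j).trans hj)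
  have key : ∀ (j : Fin n) (i : Fin m) (h : (i : ℕ) + 1 < m),
      (ψ j ≤ i ↔ ¬ φ ⟨(i : ℕ) + 1, h⟩ ≤ j) := by
    intro j i h
    rw [iff_not_comm, hψ]
    simp only [Fin.le_def]
    omega
  have exist_imp : ∀ χ : Fin m → Fin n, (∀ j i, ψ j ≤ i ↔ j ≤ χ i) →
      φ ⟨1, by omega⟩ ≠ ⟨0, by omega⟩ := by
    intro χ hχ h1
    have h2 : ψ ⟨0, by omega⟩ ≤ ⟨0, by omega⟩ :=
      (hχ _ _).mpr (by simp [Fin.le_def])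
    have h3 : (⟨1, by omega⟩ : Fin m) ≤ ψ ⟨0, by omega⟩ := (hψ _ _).mp (le_of_eq h1)
    simp only [Fin.le_def] at h2 h3
    omega
  constructor
  · constructor
    · rintro ⟨χ, _, hχ⟩
      exact exist_imp χ hχ
    · intro h1
      have hψ0 : (ψ ⟨0, by omega⟩ : ℕ) = 0 := by
        by_contra h
        have h2 : (⟨1, by omega⟩ : Fin m) ≤ ψ ⟨0, by omega⟩ := by
          simp only [Fin.le_def]; omega
        have h3 := (hψ _ _).mpr h2
        refine h1 (le_antisymm h3 ?_)
        simp [Fin.le_def]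
      set S : Fin m → Finset (Fin n) := fun i => Finset.univ.filter (fun j => ψ j ≤ i)
        with hS
      have hmem : ∀ i j, j ∈ S i ↔ ψ j ≤ i := by
        intro i j; simp [hS]
      have hSne : ∀ i, (S i).Nonempty := by
        intro i
        refine ⟨⟨0, by omega⟩, (hmem i _).mpr ?_⟩
        simp only [Fin.le_def, hψ0]
        omega
      refine ⟨fun i => (S i).max' (hSne i), ?_, ?_⟩
      · intro i i' hi
        apply Finset.le_max'
        rw [hmem]
        exact le_trans ((hmem i _).mp ((S i).max'_mem (hSne i))) hi
      · intro j i
        constructor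
        · intro hj
          exact Finset.le_max' _ _ ((hmem i j).mpr hj)
        · intro hj
          exact le_trans (hψmono hj) ((hmem i _).mp ((S i).max'_mem (hSne i)))
  · intro χ hχmono hχ i
    have h1 := exist_imp χ hχ
    have h1' : (φ ⟨1, by omega⟩ : ℕ) ≠ 0 := by
      intro h; exact h1 (Fin.ext h)
    have hpos : ∀ h : (i : ℕ) + 1 < m, 1 ≤ (φ ⟨(i : ℕ) + 1, h⟩ : ℕ) := by
      intro h
      have h2 := hφ (show (⟨1, by omega⟩ : Fin m) ≤ ⟨(i : ℕ) + 1, h⟩ by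
        simp only [Fin.le_def]; omega)
      rw [Fin.le_def] at h2
      omega
    have calc1 : ∀ h : (i : ℕ) + 1 < m,
        (χ i : ℕ) = (φ ⟨(i : ℕ) + 1, h⟩ : ℕ) - 1 := by
      intro h
      have hc := hpos h
      have hlt : (φ ⟨(i : ℕ) + 1, h⟩ : ℕ) < n := (φ _).isLt
      have lower : ((⟨(φ ⟨(i : ℕ) + 1, h⟩ : ℕ) - 1, by omega⟩ : Fin n) ≤ χ i) := by
        apply (hχ _ _).mp
        apply (key _ i h).mpr
        simp only [Fin.le_def]
        omega
      have upper : ¬ ((⟨(φ ⟨(i : ℕ) + 1, h⟩ : ℕ), hlt⟩ : Fin n) ≤ χ i) := by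
        intro hle
        have h2 := (hχ _ _).mpr hle
        have h3 := (key _ i h).mp h2
        exact h3 (by simp [Fin.le_def])
      simp only [Fin.le_def] at lower upper
      omega
    refine ⟨fun h => ⟨fun _ => calc1 h, fun heq => ?_⟩, fun hlast => ?_⟩
    · rw [calc1 h, ← heq]
    · have lower : ((⟨n - 1, by omega⟩ : Fin n) ≤ χ i) := by
        apply (hχ _ _).mp
        simp only [Fin.le_def]
        omega
      simp only [Fin.le_def] at lower
      have := (χ i).isLt
      omega
end

section
/- Let ℓ and ℓ' be left bracketing functions on Fin m. Then the pointwise maximum ℓ ∨ ℓ', defined by (ℓ ∨ ℓ')(j) = max(ℓ(j), ℓ'(j)), is again a left bracketing function on Fin m. -/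
/-- A left bracketing function on `Fin m`: (i) `ℓ j ≤ j`, (ii) `ℓ j ≤ i < j → ℓ j ≤ ℓ i`,
(iii) `ℓ` preserves the top element `m - 1`. -/
def IsLbf {m : ℕ} (ℓ : Fin m → Fin m) : Prop :=
  (∀ j, ℓ j ≤ j) ∧
  (∀ i j : Fin m, ℓ j ≤ i → i < j → ℓ j ≤ ℓ i) ∧
  (∀ j : Fin m, (j : ℕ) = m - 1 → ℓ j = j)

/-- the pointwise maximum of two lbfs is an lbf. -/
theorem stmt1 {m : ℕ} (ℓ ℓ' : Fin m → Fin m) (h : IsLbf ℓ) (h' : IsLbf ℓ') :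
    IsLbf (fun j => max (ℓ j) (ℓ' j)) := by
  obtain ⟨h1, h2, h3⟩ := h
  obtain ⟨h1', h2', h3'⟩ := h'
  refine ⟨fun j => max_le (h1 j) (h1' j), ?_, ?_⟩
  · intro i j hij hlt
    exact max_le
      (le_max_of_le_left (h2 i j (le_trans (le_max_left _ _) hij) hlt))
      (le_max_of_le_right (h2' i j (le_trans (le_max_right _ _) hij) hlt))
  · intro j hj
    simp [h3 j hj, h3' j hj]
end

section
/- Let σ : Fin m → Fin n be a monotone surjection with right adjoint σ*, and let ℓ be a left bracketing function on Fin m. Then σ ∘ ℓ ∘ σ* : Fin n → Fin n is a left bracketing function on Fin n. -/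
/-- conjugating an lbf by a monotone surjection and its right adjoint
yields an lbf. -/
theorem stmt3 {m n : ℕ} (σ : Fin m → Fin n) (hmono : Monotone σ)
    (hsurj : Function.Surjective σ)
    (σs : Fin n → Fin m) (hadj : ∀ i j, σ i ≤ j ↔ i ≤ σs j)
    (ℓ : Fin m → Fin m) (hℓ : IsLbf ℓ) :
    IsLbf (σ ∘ ℓ ∘ σs) := by
  obtain ⟨h1, h2, h3⟩ := hℓ
  have hid : ∀ j, σ (σs j) = j := by
    intro j
    obtain ⟨i, hi⟩ := hsurj j
    have h₁ : σ (σs j) ≤ j := (hadj _ _).2 le_rfl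
    have h₂ : j ≤ σ (σs j) := by
      calc j = σ i := hi.symm
        _ ≤ σ (σs j) := hmono ((hadj i j).1 hi.le)
    exact le_antisymm h₁ h₂
  refine ⟨fun j => ?_, fun i j hle hlt => ?_, fun j hj => ?_⟩
  · calc σ (ℓ (σs j)) ≤ σ (σs j) := hmono (h1 _)
      _ = j := hid j
  · have hij : σs i < σs j := by
      by_contra h
      push_neg at h
      exact absurd (hid j ▸ hid i ▸ hmono h) (not_le.2 hlt)
    have hle' : ℓ (σs j) ≤ σs i := (hadj _ _).1 hle
    exact hmono (h2 _ _ hle' hij)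
  · have htop : ∀ i : Fin m, i ≤ σs j := by
      intro i
      refine (hadj i j).1 (Fin.le_def.2 ?_)
      have := (σ i).isLt
      omega
    have hm : 0 < m := (σs j).pos
    have hsj : ((σs j : Fin m) : ℕ) = m - 1 := by
      have h' : m - 1 ≤ ((σs j : Fin m) : ℕ) := Fin.le_def.1 (htop ⟨m - 1, by omega⟩)
      have := (σs j).isLt
      omega
    simp only [Function.comp_apply, h3 _ hsj, hid]
end

section
/- Let σ : Fin m → Fin n be a monotone surjection with right adjoint σ*, and let ℓ be a left bracketing function on Fin n. Define ℓ^σ : Fin m → Fin m by ℓ^σ(j) = σ*(ℓ(σ(j))) if j = σ*(σ(j)), and ℓ^σ(j) = j otherwise. Then ℓ^σ is a left bracketing function on Fin m, ℓ^σ ∘ σ* = σ* ∘ ℓ, and consequently σ ∘ ℓ^σ ∘ σ* = ℓ. -/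
/-- the lift `ℓ^σ` of an lbf `ℓ` along a monotone surjection `σ` is an lbf,
satisfies `ℓ^σ ∘ σ* = σ* ∘ ℓ`, and hence `σ ∘ ℓ^σ ∘ σ* = ℓ`. -/
theorem stmt4 {m n : ℕ} (σ : Fin m → Fin n) (hmono : Monotone σ)
    (hsurj : Function.Surjective σ)
    (σs : Fin n → Fin m) (hadj : ∀ i j, σ i ≤ j ↔ i ≤ σs j)
    (ℓ : Fin n → Fin n) (hℓ : IsLbf ℓ)
    (ℓσ : Fin m → Fin m)
    (hdef : ∀ j : Fin m, ℓσ j = if j = σs (σ j) then σs (ℓ (σ j)) else j) :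
    IsLbf ℓσ ∧ (∀ j : Fin n, ℓσ (σs j) = σs (ℓ j)) ∧
    (∀ j : Fin n, σ (ℓσ (σs j)) = ℓ j) := by
  obtain ⟨h1, h2, h3⟩ := hℓ
  -- basic facts
  have hσσs : ∀ j, σ (σs j) = j := by
    intro j
    obtain ⟨i, hi⟩ := hsurj j
    refine le_antisymm ((hadj _ _).mpr le_rfl) ?_
    have : i ≤ σs j := (hadj _ _).mp hi.le
    calc j = σ i := hi.symm
      _ ≤ σ (σs j) := hmono this
  have hle : ∀ i, i ≤ σs (σ i) := fun i => (hadj _ _).mp le_rfl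
  have hσs_mono : ∀ a b : Fin n, a ≤ b → σs a ≤ σs b := by
    intro a b h
    exact (hadj _ _).mp ((hσσs a).le.trans h)
  -- second claim
  have hB : ∀ j : Fin n, ℓσ (σs j) = σs (ℓ j) := by
    intro j
    rw [hdef, if_pos (by rw [hσσs]), hσσs]
  refine ⟨⟨?_, ?_, ?_⟩, hB, ?_⟩
  · -- ℓσ j ≤ j
    intro j
    rw [hdef]
    split
    · next h =>
        calc σs (ℓ (σ j)) ≤ σs (σ j) := hσs_mono _ _ (h1 _)
          _ = j := h.symm
    · exact le_rfl
  · -- interpolation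
    intro i j hji hij
    rw [hdef j] at hji ⊢
    by_cases hj : j = σs (σ j)
    · rw [if_pos hj] at hji ⊢
      rw [hdef i]
      by_cases hi : i = σs (σ i)
      · rw [if_pos hi]
        apply hσs_mono
        have hsij : σ i ≤ σ j := hmono hij.le
        rcases eq_or_lt_of_le hsij with heq | hlt
        · rw [heq]
        · apply h2 _ _ _ hlt
          -- ℓ (σ j) ≤ σ i
          have : σ (σs (ℓ (σ j))) ≤ σ i := hmono hji
          rwa [hσσs] at this
      · rw [if_neg hi]
        exact hji
    · rw [if_neg hj] at hji
      exact absurd (lt_of_lt_of_le hij hji) (lt_irrefl _)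
  · -- top
    intro j hj
    have htopm : ∀ i : Fin m, i ≤ j := by
      intro i
      have := i.isLt
      have := j.isLt
      exact Fin.le_def.mpr (by omega)
    have hn : 0 < n := Fin.pos_iff_nonempty.mpr ⟨σ j⟩
    set t : Fin n := ⟨n - 1, by omega⟩ with ht
    have htop : σ j = t := by
      obtain ⟨i, hi⟩ := hsurj t
      refine le_antisymm ?_ ?_
      · have := (σ j).isLt
        exact Fin.le_def.mpr (by simp [ht]; omega)
      · rw [← hi]; exact hmono (htopm i)
    have hjs : j = σs (σ j) := le_antisymm (hle j) (htopm _)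
    rw [hdef, if_pos hjs, htop, h3 t rfl, ← htop, ← hjs]
  · intro j
    rw [hB, hσσs]
end

section
/- Let σ : Fin m → Fin n be a monotone surjection with right adjoint σ*, let ℓ be a left bracketing function on Fin m and ℓ' a left bracketing function on Fin n, and let ℓ'^σ be defined by ℓ'^σ(j) = σ*(ℓ'(σ(j))) if j = σ*(σ(j)) and ℓ'^σ(j) = j otherwise. Then σ ∘ (ℓ ∨ ℓ'^σ) ∘ σ* = (σ ∘ ℓ ∘ σ*) ∨ ℓ', where ∨ denotes pointwise maximum of functions. -/
/-- `σ ∘ (ℓ ∨ ℓ'^σ) ∘ σ* = (σ ∘ ℓ ∘ σ*) ∨ ℓ'` pointwise. -/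
theorem stmt5 {m n : ℕ} (σ : Fin m → Fin n) (hmono : Monotone σ)
    (hsurj : Function.Surjective σ)
    (σs : Fin n → Fin m) (hadj : ∀ i j, σ i ≤ j ↔ i ≤ σs j)
    (ℓ : Fin m → Fin m) (hℓ : IsLbf ℓ)
    (ℓ' : Fin n → Fin n) (hℓ' : IsLbf ℓ')
    (ℓ'σ : Fin m → Fin m)
    (hdef : ∀ j : Fin m, ℓ'σ j = if j = σs (σ j) then σs (ℓ' (σ j)) else j) :
    ∀ j : Fin n, σ (max (ℓ (σs j)) (ℓ'σ (σs j))) = max (σ (ℓ (σs j))) (ℓ' j) := by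
  have hsec : ∀ j : Fin n, σ (σs j) = j := by
    intro j
    obtain ⟨i, hi⟩ := hsurj j
    refine le_antisymm ((hadj _ _).mpr le_rfl) ?_
    calc j = σ i := hi.symm
      _ ≤ σ (σs j) := hmono ((hadj i j).mp hi.le)
  intro j
  have h1 : ℓ'σ (σs j) = σs (ℓ' j) := by
    rw [hdef, if_pos (by rw [hsec])]
    rw [hsec]
  rw [h1, hmono.map_max, hsec]
end

section
/- Let σ : Fin m → Fin n be a monotone surjection with right adjoint σ*, let u ⊆ Fin m and v ⊆ Fin n, and let ℓ_S, ℓ_T be left bracketing functions on Fin m, Fin n respectively. Then σ is an Fsk-surjection from (Fin m, u, ℓ_S) to (Fin n, v, ℓ_T) if and only if: (i) σ and σ* restrict to mutually inverse bijections between u and v, and (ii) σ(ℓ_S(σ*(j))) ≤ ℓ_T(j) for all j ∈ Fin n. -/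
/-- `σ` and `σs` restrict to mutually inverse bijections between `u` and `v`:
`σ(u) = v` and `σ*(σ(j)) = j` for all `j ∈ u`. -/
def MutInv {m n : ℕ} (σ : Fin m → Fin n) (σs : Fin n → Fin m)
    (u : Set (Fin m)) (v : Set (Fin n)) : Prop :=
  σ '' u = v ∧ ∀ j ∈ u, σs (σ j) = j

/-- `σ` is a shrink morphism from `(Fin m, u, ℓS)` to `(Fin n, v, ℓT)`. -/
def IsShrink {m n : ℕ} (σ : Fin m → Fin n) (σs : Fin n → Fin m)
    (u : Set (Fin m)) (v : Set (Fin n))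
    (ℓS : Fin m → Fin m) (ℓT : Fin n → Fin n) : Prop :=
  MutInv σ σs u v ∧
  (∀ j : Fin n, σ (ℓS (σs j)) = ℓT j) ∧
  (∀ (j : Fin m) (h : (j : ℕ) + 1 < m), σ j = σ ⟨(j : ℕ) + 1, h⟩ → σ (ℓS j) = σ j)

/-- `σ` is an Fsk-surjection from `(Fin m, u, ℓS)` to `(Fin n, v, ℓT)`: it factors as a
Tamari morphism `ℓS ≤ ℓ'` followed by a shrink morphism from `(Fin m, u, ℓ')`. -/
def IsFskSurj {m n : ℕ} (σ : Fin m → Fin n) (σs : Fin n → Fin m)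
    (u : Set (Fin m)) (v : Set (Fin n))
    (ℓS : Fin m → Fin m) (ℓT : Fin n → Fin n) : Prop :=
  ∃ ℓ' : Fin m → Fin m, IsLbf ℓ' ∧ (∀ j, ℓS j ≤ ℓ' j) ∧ IsShrink σ σs u v ℓ' ℓT

/-- explicit characterisation of Fsk-surjections. -/
theorem stmt7 {m n : ℕ} (σ : Fin m → Fin n) (hmono : Monotone σ)
    (hsurj : Function.Surjective σ)
    (σs : Fin n → Fin m) (hadj : ∀ i j, σ i ≤ j ↔ i ≤ σs j)
    (u : Set (Fin m)) (v : Set (Fin n))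
    (ℓS : Fin m → Fin m) (hS : IsLbf ℓS)
    (ℓT : Fin n → Fin n) (hT : IsLbf ℓT) :
    IsFskSurj σ σs u v ℓS ℓT ↔
      (MutInv σ σs u v ∧ ∀ j : Fin n, σ (ℓS (σs j)) ≤ ℓT j) := by
  constructor
  · rintro ⟨ℓ', _, hle, hmi, hcomp, _⟩
    refine ⟨hmi, fun j => ?_⟩
    calc σ (ℓS (σs j)) ≤ σ (ℓ' (σs j)) := hmono (hle _)
      _ = ℓT j := hcomp j
  · rintro ⟨hmi, hmain⟩
    classical
    -- basic facts about the adjunction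
    have hσσs : ∀ k, σ (σs k) = k := by
      intro k
      obtain ⟨i, hi⟩ := hsurj k
      refine le_antisymm ((hadj _ _).2 le_rfl) ?_
      calc k = σ i := hi.symm
        _ ≤ σ (σs k) := hmono ((hadj i k).1 hi.le)
    have hjσs : ∀ j, j ≤ σs (σ j) := fun j => (hadj j (σ j)).1 le_rfl
    have hσsmono : Monotone σs := fun a b h => (hadj _ _).1 ((hσσs a).le.trans h)
    have hσstop : ∀ k, σs (σ (σs k)) = σs k := fun k => by rw [hσσs]
    -- bottom of the fiber
    have hbex : ∀ j : Fin m, ∃ bj : Fin m, (σ j ≤ σ bj) ∧ ∀ i, σ j ≤ σ i → bj ≤ i := by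
      intro j
      obtain ⟨bj, hmem, hmin⟩ := Finset.exists_min_image
        (s := Finset.univ.filter fun i => σ j ≤ σ i) id
        ⟨j, Finset.mem_filter.2 ⟨Finset.mem_univ j, le_rfl⟩⟩
      exact ⟨bj, (Finset.mem_filter.1 hmem).2,
        fun i hi => hmin i (Finset.mem_filter.2 ⟨Finset.mem_univ _, hi⟩)⟩
    choose b hb_mem hb_min using hbex
    have hbj : ∀ j, b j ≤ j := fun j => hb_min j j le_rfl
    have hσb : ∀ j, σ (b j) = σ j := fun j => le_antisymm (hmono (hbj j)) (hb_mem j)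
    have hb_le_iff : ∀ (i j : Fin m), b j ≤ i ↔ σ j ≤ σ i := by
      intro i j
      constructor
      · intro h
        calc σ j = σ (b j) := (hσb j).symm
          _ ≤ σ i := hmono h
      · intro h
        exact hb_min j i h
    -- the interpolating lbf
    set ℓ' : Fin m → Fin m := fun j =>
      if j = σs (σ j) then σs (ℓT (σ j)) else max (ℓS j) (b j) with hℓdef
    have hpos : ∀ j : Fin m, j = σs (σ j) → ℓ' j = σs (ℓT (σ j)) := fun j h => if_pos h
    have hneg : ∀ j : Fin m, j ≠ σs (σ j) → ℓ' j = max (ℓS j) (b j) := fun j h => if_neg h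
    -- ℓS ≤ ℓ'
    have hle : ∀ j, ℓS j ≤ ℓ' j := by
      intro j
      by_cases h : j = σs (σ j)
      · rw [hpos j h]
        have h1 : σ (ℓS (σs (σ j))) ≤ ℓT (σ j) := hmain (σ j)
        rw [← h] at h1
        exact (hadj _ _).1 h1
      · rw [hneg j h]; exact le_max_left _ _
    refine ⟨ℓ', ⟨?_, ?_, ?_⟩, hle, hmi, ?_, ?_⟩
    · -- ℓ' j ≤ j
      intro j
      by_cases h : j = σs (σ j)
      · rw [hpos j h]
        have h1 : σs (ℓT (σ j)) ≤ σs (σ j) := hσsmono (hT.1 (σ j))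
        rw [← h] at h1
        exact h1
      · rw [hneg j h]; exact max_le (hS.1 j) (hbj j)
    · -- lbf condition (ii)
      intro i j h1 h2
      by_cases hj : j = σs (σ j)
      · rw [hpos j hj] at h1 ⊢
        have hσa : σ (σs (ℓT (σ j))) = ℓT (σ j) := hσσs _
        by_cases hi : i = σs (σ i)
        · rw [hpos i hi]
          have hij : σ i < σ j := by
            refine lt_of_le_of_ne (hmono h2.le) fun he => absurd ?_ h2.ne
            rw [hi, he, ← hj]
          refine hσsmono (hT.2.1 (σ i) (σ j) ?_ hij)
          rw [← hσa]; exact hmono h1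
        · rw [hneg i hi]
          refine le_trans ?_ (le_max_right _ _)
          have hσai : σ (σs (ℓT (σ j))) < σ i := by
            refine lt_of_le_of_ne (hmono h1) fun he => hi ?_
            have ha : σs (ℓT (σ j)) = σs (σ (σs (ℓT (σ j)))) := (hσstop _).symm
            have hie : i = σs (ℓT (σ j)) :=
              le_antisymm (by rw [ha, he]; exact hjσs i) h1
            have hkey : σs (σ i) = σs (ℓT (σ j)) := by rw [← he, hσstop]
            rw [hkey]; exact hie
          exact (lt_of_not_ge fun hba =>
            absurd ((hb_le_iff _ i).1 hba) (not_le.2 hσai)).le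
      · rw [hneg j hj] at h1 ⊢
        have hbji : b j ≤ i := le_trans (le_max_right _ _) h1
        have hσij : σ i = σ j := le_antisymm (hmono h2.le) ((hb_le_iff i j).1 hbji)
        have hi : i ≠ σs (σ i) := by
          intro he
          have : j ≤ i := by rw [he, hσij]; exact hjσs j
          exact absurd this (not_le.2 h2)
        rw [hneg i hi]
        have hbi : b i = b j :=
          le_antisymm ((hb_le_iff _ _).2 (by rw [hσb, hσij]))
            ((hb_le_iff _ _).2 (by rw [hσb, hσij]))
        refine max_le ?_ ?_
        · exact le_trans
            (hS.2.1 i j (le_trans (le_max_left _ _) h1) h2) (le_max_left _ _)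
        · rw [← hbi]; exact le_max_right _ _
    · -- lbf condition (iii)
      intro j hj
      have hm : 0 < m := j.pos
      have htopj : ∀ i : Fin m, i ≤ j := by
        intro i
        have h1 := i.isLt
        exact Fin.le_def.2 (by omega)
      have hjt : j = σs (σ j) := le_antisymm (hjσs j) (htopj _)
      have hσtop : ∀ k : Fin n, k ≤ σ j := by
        intro k
        obtain ⟨i, hi⟩ := hsurj k
        exact hi ▸ hmono (htopj i)
      have hn : 0 < n := (σ j).pos
      have hσjval : (σ j : ℕ) = n - 1 := by
        have h1 := (σ j).isLt
        have h2 := Fin.le_def.1 (hσtop ⟨n - 1, by omega⟩)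
        simp at h2
        omega
      rw [hpos j hjt, hT.2.2 _ hσjval, ← hjt]
    · -- σ ∘ ℓ' ∘ σs = ℓT
      intro k
      have h1 : σs k = σs (σ (σs k)) := (hσstop k).symm
      rw [hpos (σs k) h1, hσσs, hσσs]
    · -- fiber condition
      intro j h hcond
      have hjnt : j ≠ σs (σ j) := by
        intro he
        have h1 : (⟨(j : ℕ) + 1, h⟩ : Fin m) ≤ σs (σ j) := by
          rw [hcond]; exact hjσs _
        rw [← he] at h1
        have h2 : (j : ℕ) + 1 ≤ (j : ℕ) := h1
        omega
      rw [hneg j hjnt]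
      refine le_antisymm (hmono (max_le (hS.1 j) (hbj j)))
        ((hb_le_iff _ j).1 (le_max_right _ _))
end

section
/- Let σ be an Fsk-surjection from (Fin m, u, ℓ_S) to (Fin n, v, ℓ_T), and let ℓ_T^σ : Fin m → Fin m be defined by ℓ_T^σ(j) = σ*(ℓ_T(σ(j))) if j = σ*(σ(j)) and ℓ_T^σ(j) = j otherwise. Then σ is a shrink morphism from (Fin m, u, ℓ_S ∨ ℓ_T^σ) to (Fin n, v, ℓ_T), where ∨ denotes pointwise maximum. Moreover, ℓ_S ∨ ℓ_T^σ is the greatest lbf with this property: for every lbf ℓ' on Fin m with ℓ_S ≤ ℓ' such that σ is a shrink morphism from (Fin m, u, ℓ') to (Fin n, v, ℓ_T), one has ℓ' ≤ ℓ_S ∨ ℓ_T^σ pointwise. -/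
/-- canonical factorisation of an Fsk-surjection through the greatest
suitable lbf `ℓS ∨ ℓT^σ`. -/
theorem stmt8 {m n : ℕ} (σ : Fin m → Fin n) (hmono : Monotone σ)
    (hsurj : Function.Surjective σ)
    (σs : Fin n → Fin m) (hadj : ∀ i j, σ i ≤ j ↔ i ≤ σs j)
    (u : Set (Fin m)) (v : Set (Fin n))
    (ℓS : Fin m → Fin m) (hS : IsLbf ℓS)
    (ℓT : Fin n → Fin n) (hT : IsLbf ℓT)
    (hFsk : IsFskSurj σ σs u v ℓS ℓT)
    (ℓTσ : Fin m → Fin m)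
    (hdef : ∀ j : Fin m, ℓTσ j = if j = σs (σ j) then σs (ℓT (σ j)) else j) :
    IsShrink σ σs u v (fun j => max (ℓS j) (ℓTσ j)) ℓT ∧
    (∀ ℓ' : Fin m → Fin m, IsLbf ℓ' → (∀ j, ℓS j ≤ ℓ' j) →
      IsShrink σ σs u v ℓ' ℓT → ∀ j, ℓ' j ≤ max (ℓS j) (ℓTσ j)) := by

  obtain ⟨ℓ'', hlbf'', hle'', hmut, hii, hiii⟩ := hFsk
  have hss : ∀ j, σ (σs j) = j := by
    intro j
    obtain ⟨i, hi⟩ := hsurj j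
    refine le_antisymm ((hadj _ _).mpr le_rfl) ?_
    calc j = σ i := hi.symm
      _ ≤ σ (σs j) := hmono ((hadj i j).mp (le_of_eq hi))
  constructor
  · refine ⟨hmut, ?_, ?_⟩
    · intro j
      have h1 : ℓTσ (σs j) = σs (ℓT j) := by
        rw [hdef, hss, if_pos rfl]
      show σ (max (ℓS (σs j)) (ℓTσ (σs j))) = ℓT j
      have h2 : σ (ℓS (σs j)) ≤ ℓT j := by
        rw [← hii j]; exact hmono (hle'' _)
      rw [h1, hmono.map_max, hss, max_eq_right h2]
    · intro j h hstep
      have hj : j ≠ σs (σ j) := by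
        intro he
        have h1 : (⟨(j : ℕ) + 1, h⟩ : Fin m) ≤ σs (σ j) :=
          (hadj _ _).mp (le_of_eq hstep.symm)
        rw [← he] at h1
        simp [Fin.le_def] at h1
      have h2 : ℓTσ j = j := by rw [hdef, if_neg hj]
      show σ (max (ℓS j) (ℓTσ j)) = σ j
      rw [h2, max_eq_right (hS.1 j)]
  · rintro ℓ' hlbf' hle' ⟨_, hii', _⟩ j
    by_cases hc : j = σs (σ j)
    · have h2 : σ (ℓ' j) = ℓT (σ j) := by
        have := hii' (σ j); rwa [← hc] at this
      have h3 : ℓ' j ≤ ℓTσ j := by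
        rw [hdef, if_pos hc]
        exact (hadj _ _).mp (le_of_eq h2)
      exact le_max_of_le_right h3
    · have h2 : ℓTσ j = j := by rw [hdef, if_neg hc]
      exact le_max_of_le_right ((hlbf'.1 j).trans_eq h2.symm)
end

section
/- Let σ be an Fsk-surjection from (Fin m, u, ℓ_S) to (Fin n, v, ℓ_T). Then σ ∘ ℓ_S ∘ σ* is a left bracketing function on Fin n, σ is an Fsk-surjection from (Fin m, u, ℓ_S) to (Fin n, v, σ ∘ ℓ_S ∘ σ*), and σ(ℓ_S(σ*(j))) ≤ ℓ_T(j) for all j ∈ Fin n (so that the identity of Fin n is a Tamari morphism from (Fin n, v, σ ∘ ℓ_S ∘ σ*) to (Fin n, v, ℓ_T)). -/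
/-- an Fsk-surjection factors as an Fsk-surjection onto `σ ∘ ℓS ∘ σ*`
followed by a Tamari morphism. -/
theorem stmt9 {m n : ℕ} (σ : Fin m → Fin n) (hmono : Monotone σ)
    (hsurj : Function.Surjective σ)
    (σs : Fin n → Fin m) (hadj : ∀ i j, σ i ≤ j ↔ i ≤ σs j)
    (u : Set (Fin m)) (v : Set (Fin n))
    (ℓS : Fin m → Fin m) (hS : IsLbf ℓS)
    (ℓT : Fin n → Fin n) (hT : IsLbf ℓT)
    (hFsk : IsFskSurj σ σs u v ℓS ℓT) :
    IsLbf (σ ∘ ℓS ∘ σs) ∧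
    IsFskSurj σ σs u v ℓS (σ ∘ ℓS ∘ σs) ∧
    (∀ j : Fin n, σ (ℓS (σs j)) ≤ ℓT j) := by
  obtain ⟨ℓ', hℓ', hle', hshr⟩ := hFsk
  -- basic adjunction facts
  have hle : ∀ i : Fin m, i ≤ σs (σ i) := fun i => (hadj i (σ i)).mp le_rfl
  have hσσs_le : ∀ j : Fin n, σ (σs j) ≤ j := fun j => (hadj (σs j) j).mpr le_rfl
  have hσσs : ∀ j : Fin n, σ (σs j) = j := by
    intro j
    refine le_antisymm (hσσs_le j) ?_
    obtain ⟨i, rfl⟩ := hsurj j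
    exact hmono (hle i)
  have hσs_strict : ∀ i j : Fin n, i < j → σs i < σs j := by
    intro i j hij
    rcases lt_or_ge (σs i) (σs j) with h | h
    · exact h
    · exact absurd (by rw [← hσσs i, ← hσσs j]; exact hmono h) (not_le.mpr hij)
  -- part 3
  have part3 : ∀ j : Fin n, σ (ℓS (σs j)) ≤ ℓT j := by
    intro j
    rw [← hshr.2.1 j]
    exact hmono (hle' (σs j))
  -- part 1
  have part1 : IsLbf (σ ∘ ℓS ∘ σs) := by
    refine ⟨?_, ?_, ?_⟩
    · intro j
      have := hmono (hS.1 (σs j))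
      simpa [hσσs j] using this
    · intro i j h1 h2
      have h3 : ℓS (σs j) ≤ σs i := (hadj _ i).mp h1
      have h4 : σs i < σs j := hσs_strict i j h2
      exact hmono (hS.2.1 (σs i) (σs j) h3 h4)
    · intro j hj
      have hm : (0 : ℕ) < m := (σs j).pos
      have htop : ∀ k : Fin m, k ≤ σs j := by
        intro k
        refine (hadj k j).mp ?_
        have : (σ k : ℕ) ≤ n - 1 := Nat.le_pred_of_lt (σ k).isLt
        exact Fin.le_def.mpr (by omega)
      have hsj : (σs j : ℕ) = m - 1 := by
        have h1 := htop ⟨m - 1, by omega⟩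
        have h2 : (σs j : ℕ) ≤ m - 1 := Nat.le_pred_of_lt (σs j).isLt
        exact le_antisymm h2 h1
      show σ (ℓS (σs j)) = j
      rw [hS.2.2 (σs j) hsj, hσσs j]
  -- the modified lbf on Fin m
  set ℓ'' : Fin m → Fin m := fun j => if σs (σ j) = j then ℓS j else ℓ' j with hℓ''def
  have hmax_lt : ∀ i j : Fin m, σs (σ i) = i → i < j → σ i < σ j := by
    intro i j hi hij
    rcases lt_or_ge (σ i) (σ j) with h | h
    · exact h
    have : σ i = σ j := le_antisymm (hmono hij.le) h
    have : j ≤ i := hi ▸ this ▸ hle j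
    exact absurd hij (not_lt.mpr this)
  have hcollapse : ∀ j : Fin m, σs (σ j) ≠ j → σ (ℓ' j) = σ j := by
    intro j hj
    have hjlt : j < σs (σ j) := lt_of_le_of_ne (hle j) (Ne.symm hj)
    have h1 : (j : ℕ) + 1 < m := by
      have := Fin.lt_def.mp hjlt
      have := (σs (σ j)).isLt
      omega
    have h2 : σ j = σ ⟨(j : ℕ) + 1, h1⟩ := by
      refine le_antisymm (hmono (Fin.le_def.mpr (by simp))) ?_
      have : (⟨(j : ℕ) + 1, h1⟩ : Fin m) ≤ σs (σ j) := Fin.le_def.mpr (Fin.lt_def.mp hjlt)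
      have := hmono this
      rwa [hσσs (σ j)] at this
    exact hshr.2.2 j h1 h2
  have hℓ''lbf : IsLbf ℓ'' := by
    refine ⟨?_, ?_, ?_⟩
    · intro j
      by_cases h : σs (σ j) = j <;> simp [hℓ''def, h, hS.1 j, hℓ'.1 j]
    · intro i j h1 h2
      by_cases hj : σs (σ j) = j
      · have h1' : ℓS j ≤ i := by simpa [hℓ''def, hj] using h1
        have := hS.2.1 i j h1' h2
        by_cases hi : σs (σ i) = i
        · simpa [hℓ''def, hj, hi] using this
        · simp only [hℓ''def, hj, hi, if_true, if_false, if_neg]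
          exact this.trans (hle' i)
      · have h1' : ℓ' j ≤ i := by simpa [hℓ''def, hj] using h1
        by_cases hi : σs (σ i) = i
        · exfalso
          have hσij : σ i < σ j := hmax_lt i j hi h2
          have : σ (ℓ' j) ≤ σ i := hmono h1'
          rw [hcollapse j hj] at this
          exact absurd this (not_le.mpr hσij)
        · simp only [hℓ''def, hj, hi, if_neg]
          exact hℓ'.2.1 i j h1' h2
    · intro j hj
      have hjmax : σs (σ j) = j := by
        refine le_antisymm ?_ (hle j)
        exact Fin.le_def.mpr (by have := (σs (σ j)).isLt; omega)
      simp only [hℓ''def, hjmax, if_true]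
      exact hS.2.2 j hj
  refine ⟨part1, ⟨ℓ'', hℓ''lbf, ?_, hshr.1, ?_, ?_⟩, part3⟩
  · intro j
    by_cases h : σs (σ j) = j <;> simp [hℓ''def, h, hle' j]
  · intro j
    have : σs (σ (σs j)) = σs j := by rw [hσσs j]
    simp [hℓ''def, this]
  · intro j h hσj
    have hne : σs (σ j) ≠ j := by
      intro heq
      have : (⟨(j : ℕ) + 1, h⟩ : Fin m) ≤ σs (σ j) := by
        rw [hσj]; exact hle _
      rw [heq] at this
      have h2 := Fin.le_def.mp this
      simp only [Fin.val_mk] at h2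
      omega
    simp only [hℓ''def, hne, if_neg, if_false]
    exact hshr.2.2 j h hσj
end

section
/- Let φ : Fin m → Fin n be monotone with φ(0) = 0, let k be the cardinality of the image of φ, and let σ : Fin m → Fin k and δ : Fin k → Fin n be the monotone surjection and monotone injection with φ = δ ∘ σ (the epi–mono factorization of φ through its image). Let σ* and δ* be the right adjoints of σ and δ, and let δ_* be the right adjoint of δ*. Let ℓ_S and ℓ_T be left bracketing functions on Fin m and Fin n respectively. Then σ(ℓ_S(σ*(j))) ≤ δ*(ℓ_T(δ_*(j))) for all j ∈ Fin k if and only if for every j ∈ Fin m with j + 1 < m, φ(j) < φ(j+1) implies φ(ℓ_S(j)) ≤ ℓ_T(φ(j+1) − 1). -/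
/-- `σ ∘ ℓS ∘ σ* ≤ δ* ∘ ℓT ∘ δ_*` iff condition (d) holds for `φ = δ ∘ σ`. -/
theorem stmt10 {m n k : ℕ} (hm : 0 < m) (hn : 0 < n)
    (φ : Fin m → Fin n) (hφ : Monotone φ) (hφ0 : φ ⟨0, hm⟩ = ⟨0, hn⟩)
    (σ : Fin m → Fin k) (hσm : Monotone σ) (hσsurj : Function.Surjective σ)
    (δ : Fin k → Fin n) (hδm : Monotone δ) (hδinj : Function.Injective δ)
    (hfact : ∀ i, φ i = δ (σ i))
    (σs : Fin k → Fin m) (hσadj : ∀ i j, σ i ≤ j ↔ i ≤ σs j)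
    (δs : Fin n → Fin k) (hδadj : ∀ i j, δ i ≤ j ↔ i ≤ δs j)
    (δss : Fin k → Fin n) (hδssadj : ∀ i j, δs i ≤ j ↔ i ≤ δss j)
    (ℓS : Fin m → Fin m) (hℓS : IsLbf ℓS)
    (ℓT : Fin n → Fin n) (hℓT : IsLbf ℓT) :
    (∀ j : Fin k, σ (ℓS (σs j)) ≤ δs (ℓT (δss j))) ↔
      (∀ (j : Fin m) (h : (j : ℕ) + 1 < m),
        φ j < φ ⟨(j : ℕ) + 1, h⟩ →
          φ (ℓS j) ≤ ℓT ⟨(φ ⟨(j : ℕ) + 1, h⟩ : ℕ) - 1,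
            lt_of_le_of_lt (Nat.sub_le _ _) (Fin.is_lt _)⟩) := by
  have hδsm : StrictMono δ := hδm.strictMono_of_injective hδinj
  have hσσs : ∀ j, σ (σs j) = j := by
    intro j
    obtain ⟨i, hi⟩ := hσsurj j
    refine le_antisymm ((hσadj _ _).mpr le_rfl) ?_
    calc j = σ i := hi.symm
      _ ≤ σ (σs j) := hσm ((hσadj i j).mp hi.le)
  have hδδs : ∀ t, δ (δs t) ≤ t := fun t => (hδadj _ _).mpr le_rfl
  have hδsδss : ∀ j, δs (δss j) ≤ j := fun j => (hδssadj _ _).mpr le_rfl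
  have hσstep : ∀ (i : Fin m) (h : (i : ℕ) + 1 < m),
      (σ ⟨(i : ℕ) + 1, h⟩ : ℕ) ≤ (σ i : ℕ) + 1 := by
    intro i h
    by_contra h'
    push_neg at h'
    have hck : (σ i : ℕ) + 1 < k := lt_trans h' (Fin.is_lt _)
    obtain ⟨i', hi'⟩ := hσsurj ⟨(σ i : ℕ) + 1, hck⟩
    rcases le_or_gt i' i with hle | hlt
    · have h2 := hσm hle
      rw [hi'] at h2
      have := Fin.le_def.mp h2
      simp only [] at this
      omega
    · have h2 : (⟨(i : ℕ) + 1, h⟩ : Fin m) ≤ i' := Fin.le_def.mpr (Fin.lt_def.mp hlt)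
      have h3 := hσm h2
      rw [hi'] at h3
      have := Fin.le_def.mp h3
      simp only [] at this
      omega
  have hδss_val : ∀ (j : Fin k) (hj : (j : ℕ) + 1 < k),
      (δss j : ℕ) = (δ ⟨(j : ℕ) + 1, hj⟩ : ℕ) - 1 := by
    intro j hj
    set j1 : Fin k := ⟨(j : ℕ) + 1, hj⟩ with hj1
    have hjlt : j < j1 := Fin.lt_def.mpr (by simp [hj1])
    have hpos : 0 < (δ j1 : ℕ) :=
      lt_of_le_of_lt (Nat.zero_le _) (Fin.lt_def.mp (hδsm hjlt))
    have h1 : ¬ (j1 ≤ δs (δss j)) := fun hc =>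
      absurd (le_trans hc (hδsδss j)) (not_le.mpr hjlt)
    have h2 : ¬ (δ j1 ≤ δss j) := fun hc => h1 ((hδadj _ _).mp hc)
    have h2' : (δss j : ℕ) < (δ j1 : ℕ) := Fin.lt_def.mp (not_le.mp h2)
    have hlt' : (δ j1 : ℕ) - 1 < n := lt_of_le_of_lt (Nat.sub_le _ _) (Fin.is_lt _)
    have h3 : ¬ (δ j1 ≤ (⟨(δ j1 : ℕ) - 1, hlt'⟩ : Fin n)) := by
      rw [Fin.le_def]; simp only []; omega
    have h4 : ¬ (j1 ≤ δs ⟨(δ j1 : ℕ) - 1, hlt'⟩) := fun hc => h3 ((hδadj _ _).mpr hc)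
    have h5 : δs ⟨(δ j1 : ℕ) - 1, hlt'⟩ ≤ j := by
      have h4' : (δs ⟨(δ j1 : ℕ) - 1, hlt'⟩ : ℕ) < (j : ℕ) + 1 :=
        Fin.lt_def.mp (not_le.mp h4)
      exact Fin.le_def.mpr (by omega)
    have h6 : (δ j1 : ℕ) - 1 ≤ (δss j : ℕ) := Fin.le_def.mp ((hδssadj _ _).mp h5)
    show (δss j : ℕ) = (δ j1 : ℕ) - 1
    omega
  constructor
  · intro H j h hlt
    have hσlt : σ j < σ ⟨(j : ℕ) + 1, h⟩ := by
      have hd : δ (σ j) < δ (σ ⟨(j : ℕ) + 1, h⟩) := by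
        rw [← hfact, ← hfact]; exact hlt
      exact hδsm.lt_iff_lt.mp hd
    have hstep := hσstep j h
    have hval : (σ ⟨(j : ℕ) + 1, h⟩ : ℕ) = (σ j : ℕ) + 1 :=
      le_antisymm hstep (Fin.lt_def.mp hσlt)
    have hσk : (σ j : ℕ) + 1 < k := hval ▸ (Fin.is_lt _)
    have hσsσ : σs (σ j) = j := by
      refine le_antisymm ?_ ((hσadj _ _).mp le_rfl)
      by_contra hc
      have hjlt : j < σs (σ j) := not_le.mp hc
      have h2 : (⟨(j : ℕ) + 1, h⟩ : Fin m) ≤ σs (σ j) := Fin.le_def.mpr (Fin.lt_def.mp hjlt)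
      exact absurd ((hσadj _ _).mpr h2) (not_le.mpr hσlt)
    have Hj := H (σ j)
    rw [hσsσ] at Hj
    have hδssval := hδss_val (σ j) hσk
    have hkey : (⟨(σ j : ℕ) + 1, hσk⟩ : Fin k) = σ ⟨(j : ℕ) + 1, h⟩ := Fin.ext hval.symm
    have hδsseq : δss (σ j) = ⟨(φ ⟨(j : ℕ) + 1, h⟩ : ℕ) - 1,
        lt_of_le_of_lt (Nat.sub_le _ _) (Fin.is_lt _)⟩ := by
      apply Fin.ext
      rw [hδssval]
      simp only []
      rw [hkey, ← hfact]
    rw [hδsseq] at Hj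
    have final := le_trans (hδm Hj) (hδδs _)
    rw [← hfact] at final
    exact final
  · intro H j
    by_cases hj : (j : ℕ) + 1 < k
    · set j1 : Fin k := ⟨(j : ℕ) + 1, hj⟩ with hj1
      have hσi : σ (σs j) = j := hσσs j
      obtain ⟨i', hi'⟩ := hσsurj j1
      have hii' : σs j < i' := by
        by_contra hc
        push_neg at hc
        have h2 := hσm hc
        rw [hi', hσi] at h2
        have := Fin.le_def.mp h2
        simp only [hj1] at this
        omega
      have him : (σs j : ℕ) + 1 < m := Nat.lt_of_le_of_lt (Fin.lt_def.mp hii') i'.isLt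
      have hstep := hσstep (σs j) him
      rw [hσi] at hstep
      have h1 : ¬ (σ ⟨(σs j : ℕ) + 1, him⟩ ≤ j) := by
        intro hc
        have h2 := (hσadj _ _).mp hc
        have := Fin.le_def.mp h2
        simp only [] at this
        omega
      have hval : (σ ⟨(σs j : ℕ) + 1, him⟩ : ℕ) = (j : ℕ) + 1 := by
        have h2 := Fin.lt_def.mp (not_le.mp h1)
        omega
      have hσeq : σ ⟨(σs j : ℕ) + 1, him⟩ = j1 := Fin.ext hval
      have hφlt : φ (σs j) < φ ⟨(σs j : ℕ) + 1, him⟩ := by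
        rw [hfact, hfact, hσi, hσeq]
        exact hδsm (Fin.lt_def.mpr (by simp [hj1]))
      have HH := H (σs j) him hφlt
      have hδssval := hδss_val j hj
      have heq : (⟨(φ ⟨(σs j : ℕ) + 1, him⟩ : ℕ) - 1,
          lt_of_le_of_lt (Nat.sub_le _ _) (Fin.is_lt _)⟩ : Fin n) = δss j := by
        apply Fin.ext
        simp only []
        rw [hδssval, hfact, hσeq]
      rw [heq, hfact] at HH
      exact (hδadj _ _).mp HH
    · have hk : 0 < k := j.pos
      have hjtop : (j : ℕ) = k - 1 := by have := j.isLt; omega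
      have hn1 : n - 1 < n := Nat.sub_lt hn one_pos
      have h1 : δs ⟨n - 1, hn1⟩ ≤ j := Fin.le_def.mpr (by
        have := (δs (⟨n - 1, hn1⟩ : Fin n)).isLt; omega)
      have h2 := Fin.le_def.mp ((hδssadj _ _).mp h1)
      have h3 : (δss j : ℕ) = n - 1 := by have := (δss j).isLt; simp only [] at h2; omega
      have h4 : ℓT (δss j) = δss j := hℓT.2.2 _ h3
      rw [h4]
      have h5 : δ ⟨k - 1, Nat.sub_lt hk one_pos⟩ ≤ δss j := Fin.le_def.mpr (by
        rw [h3]; have := (δ (⟨k - 1, Nat.sub_lt hk one_pos⟩ : Fin k)).isLt; omega)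
      have h6 := (hδadj _ _).mp h5
      refine le_trans ?_ h6
      exact Fin.le_def.mpr (show (σ (ℓS (σs j)) : ℕ) ≤ k - 1 from by
        have := (σ (ℓS (σs j))).isLt; omega)
end

section
/- Let φ : Fin m → Fin n be monotone with φ(0) = 0, let k be the cardinality of the image of φ, and let σ : Fin m → Fin k and δ : Fin k → Fin n be the monotone surjection and monotone injection with φ = δ ∘ σ. Let δ* be the right adjoint of δ and δ_* the right adjoint of δ*. Then for every j ∈ Fin m with j + 1 < m, if φ(j) < φ(j+1) then δ_*(σ(j)) = φ(j+1) − 1. -/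
/-- if `φ(j) < φ(j+1)` then `δ_*(σ(j)) = φ(j+1) - 1`, where `φ = δ ∘ σ`
is the epi-mono factorisation and `δ_*` is the right adjoint of `δ*`. -/
theorem stmt11 {m n k : ℕ} (hm : 0 < m) (hn : 0 < n)
    (φ : Fin m → Fin n) (hφ : Monotone φ) (hφ0 : φ ⟨0, hm⟩ = ⟨0, hn⟩)
    (σ : Fin m → Fin k) (hσm : Monotone σ) (hσsurj : Function.Surjective σ)
    (δ : Fin k → Fin n) (hδm : Monotone δ) (hδinj : Function.Injective δ)
    (hfact : ∀ i, φ i = δ (σ i))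
    (δs : Fin n → Fin k) (hδadj : ∀ i j, δ i ≤ j ↔ i ≤ δs j)
    (δss : Fin k → Fin n) (hδssadj : ∀ i j, δs i ≤ j ↔ i ≤ δss j) :
    ∀ (j : Fin m) (h : (j : ℕ) + 1 < m),
      φ j < φ ⟨(j : ℕ) + 1, h⟩ →
        (δss (σ j) : ℕ) = (φ ⟨(j : ℕ) + 1, h⟩ : ℕ) - 1 := by
  intro j h hlt
  set j1 : Fin m := ⟨(j : ℕ) + 1, h⟩ with hj1
  have hδsm : StrictMono δ := hδm.strictMono_of_injective hδinj
  have hσlt : σ j < σ j1 := by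
    have : δ (σ j) < δ (σ j1) := by rw [← hfact, ← hfact]; exact hlt
    exact hδsm.lt_iff_lt.mp this
  -- consecutive step: σ j1 = σ j + 1
  have hstep : (σ j1 : ℕ) = (σ j : ℕ) + 1 := by
    by_contra hne
    have h2 : (σ j : ℕ) + 1 < (σ j1 : ℕ) :=
      lt_of_le_of_ne (Nat.succ_le_of_lt hσlt) (Ne.symm hne)
    obtain ⟨i, hi⟩ := hσsurj ⟨(σ j : ℕ) + 1, lt_trans h2 (σ j1).isLt⟩
    rcases le_or_gt (i : ℕ) (j : ℕ) with hij | hij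
    · have := hσm (show i ≤ j from hij)
      rw [hi] at this
      exact absurd this (by simp [Fin.le_def])
    · have hij1 : j1 ≤ i := by simpa [Fin.le_def, hj1] using hij
      have := hσm hij1
      rw [hi] at this
      simp only [Fin.le_def] at this
      omega
  have hφ1pos : 1 ≤ (φ j1 : ℕ) := by
    have : (φ j : ℕ) < (φ j1 : ℕ) := hlt
    omega
  set p : Fin n := ⟨(φ j1 : ℕ) - 1, lt_trans (by omega) (φ j1).isLt⟩ with hp
  -- upper bound
  have hup : (δss (σ j) : ℕ) ≤ (φ j1 : ℕ) - 1 := by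
    have hδsq : δs (δss (σ j)) ≤ σ j := (hδssadj _ _).mpr le_rfl
    have hnot : ¬ δ (σ j1) ≤ δss (σ j) := by
      intro hc
      have : σ j1 ≤ δs (δss (σ j)) := (hδadj _ _).mp hc
      exact absurd (le_trans this hδsq) (not_le_of_gt hσlt)
    have : (δss (σ j) : ℕ) < (δ (σ j1) : ℕ) := by
      rcases lt_or_ge (δss (σ j) : ℕ) (δ (σ j1) : ℕ) with h' | h'
      · exact h'
      · exact absurd (show δ (σ j1) ≤ δss (σ j) from h') hnot
    rw [← hfact] at this
    omega
  -- lower bound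
  have hlow : (φ j1 : ℕ) - 1 ≤ (δss (σ j) : ℕ) := by
    have hplt : p < δ (σ j1) := by
      rw [← hfact]
      simp only [Fin.lt_def, hp]
      omega
    have hδsp : ¬ σ j1 ≤ δs p := by
      intro hc
      exact absurd ((hδadj _ _).mpr hc) (not_le_of_gt hplt)
    have hδsp' : (δs p : ℕ) < (σ j1 : ℕ) := by
      rcases lt_or_ge (δs p : ℕ) (σ j1 : ℕ) with h' | h'
      · exact h'
      · exact absurd (show σ j1 ≤ δs p from h') hδsp
    have : δs p ≤ σ j := by
      simp only [Fin.le_def]; omega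
    exact (hδssadj _ _).mp this
  omega
end

section
/- Let m ≥ 0, let n ≥ 1, let v ⊆ Fin n have cardinality m, and let ℓ_T be a left bracketing function on Fin n. Let u = { i ∈ Fin(m+1) | i ≠ 0 } and let ℓ_⊥ be the bottom lbf on Fin(m+1) (ℓ_⊥(m) = m and ℓ_⊥(i) = 0 for i < m). Then there exists exactly one explicit Fsk-morphism φ from (Fin(m+1), u, ℓ_⊥) to (Fin n, v, ℓ_T). -/
/-- `φ` is an explicit Fsk-morphism from `(Fin a, u, ℓS)` to `(Fin b, v, ℓT)`:
it is monotone, preserves `0` (hence has a right adjoint `φ*`), `φ` and `φ*` restrict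
to mutually inverse bijections between `u` and `v`, and whenever `φ(j) < φ(j+1)` one
has `φ(ℓS(j)) ≤ ℓT(φ(j+1) - 1)`. -/
def IsFskMor {a b : ℕ} (φ : Fin a → Fin b)
    (u : Set (Fin a)) (ℓS : Fin a → Fin a)
    (v : Set (Fin b)) (ℓT : Fin b → Fin b) : Prop :=
  Monotone φ ∧
  (∀ i : Fin a, (i : ℕ) = 0 → (φ i : ℕ) = 0) ∧
  (∃ φs : Fin b → Fin a, (∀ i j, φ i ≤ j ↔ i ≤ φs j) ∧
    (∀ j ∈ u, φ j ∈ v) ∧ (∀ i ∈ v, φs i ∈ u) ∧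
    (∀ j ∈ u, φs (φ j) = j) ∧ (∀ i ∈ v, φ (φs i) = i)) ∧
  (∀ (j : Fin a) (h : (j : ℕ) + 1 < a),
    φ j < φ ⟨(j : ℕ) + 1, h⟩ →
      φ (ℓS j) ≤ ℓT ⟨(φ ⟨(j : ℕ) + 1, h⟩ : ℕ) - 1,
        lt_of_le_of_lt (Nat.sub_le _ _) (Fin.is_lt _)⟩)

/-!
On `u = {i ≠ 0}` a morphism is monotone and injective (its right adjoint inverts it there) with
image `v`, so it is `k + 1 ↦` the `k`-th smallest element of `v`, and `0 ↦ 0`. Conversely this map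
is a morphism: a monotone map out of a finite linear order that sends `⊥` to `⊥` has a right
adjoint, which inverts it on the upper set `u` where it is injective, and condition (d) holds
because the bottom lbf sends every `j < m` to `0`.
-/

open Set

section GaloisConnection

variable {α β : Type*}

theorem Monotone.exists_galoisConnection [Fintype α] [LinearOrder α] [OrderBot α] [Preorder β]
    {l : α → β} (hl : Monotone l) (hbot : IsBot (l ⊥)) : ∃ u : β → α, GaloisConnection l u := by
  classical
  refine ⟨fun b => (Finset.univ.filter (l · ≤ b)).max' ⟨⊥, by simpa using hbot b⟩,
    fun a b => ⟨fun h => Finset.le_max' _ _ (by simpa using h), fun h => (hl h).trans ?_⟩⟩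
  simpa using Finset.max'_mem (Finset.univ.filter (l · ≤ b)) _

theorem GaloisConnection.leftInvOn_of_injOn [Preorder α] [PartialOrder β] {l : α → β}
    {u : β → α} (gc : GaloisConnection l u) {s : Set α} (hs : IsUpperSet s) (hl : InjOn l s) :
    LeftInvOn u l s := fun a ha =>
  hl (hs (gc.le_u_l a) ha) ha (gc.l_u_l_eq_l a)

theorem Monotone.exists_galoisConnection_invOn [Fintype α] [LinearOrder α] [OrderBot α]
    [PartialOrder β] {l : α → β} (hl : Monotone l) (hbot : IsBot (l ⊥)) {s : Set α} {t : Set β}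
    (hs : IsUpperSet s) (hinj : InjOn l s) (hsurj : SurjOn l s t) :
    ∃ u : β → α, GaloisConnection l u ∧ MapsTo u t s ∧ InvOn u l s t := by
  obtain ⟨u, gc⟩ := hl.exists_galoisConnection hbot
  have hleft := gc.leftInvOn_of_injOn hs hinj
  refine ⟨u, gc, fun b hb => ?_, hleft, fun b hb => ?_⟩ <;> obtain ⟨a, ha, rfl⟩ := hsurj hb
  · rwa [hleft ha]
  · exact gc.l_u_l_eq_l a

end GaloisConnection

namespace Fin

variable {α : Type*} {m : ℕ}

theorem isUpperSet_ne_zero : IsUpperSet {i : Fin (m + 1) | i ≠ 0} := fun _ _ hab ha =>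
  (pos_iff_ne_zero.mpr ha |>.trans_le hab).ne'

theorem monotone_cons_bot [Preorder α] [OrderBot α] {e : Fin m → α} (he : Monotone e) :
    Monotone (cons ⊥ e : Fin (m + 1) → α) := by
  intro i j hij
  cases i using Fin.cases with
  | zero => simp
  | succ i =>
    obtain ⟨j, rfl⟩ := exists_succ_eq.mpr (succ_pos i |>.trans_le hij).ne'
    simpa using he (succ_le_succ_iff.mp hij)

theorem injOn_cons {x : α} {e : Fin m → α} (he : Function.Injective e) :
    InjOn (cons x e : Fin (m + 1) → α) {i | i ≠ 0} := by
  intro i hi j hj h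
  obtain ⟨i, rfl⟩ := exists_succ_eq.mpr hi
  obtain ⟨j, rfl⟩ := exists_succ_eq.mpr hj
  simpa using he (by simpa using h)

theorem eq_cons_bot_orderEmbOfFin [LinearOrder α] [OrderBot α] {v : Finset α} (hv : v.card = m)
    {ψ : Fin (m + 1) → α} (hψ : Monotone ψ) (h0 : ψ 0 = ⊥) (hinj : InjOn ψ {i | i ≠ 0})
    (hmaps : MapsTo ψ {i | i ≠ 0} v) : ψ = cons ⊥ (v.orderEmbOfFin hv) := by
  have hsucc : StrictMono (tail ψ) :=
    (hψ.comp strictMono_succ.monotone).strictMono_of_injective fun a b h =>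
      succ_injective _ (hinj (succ_ne_zero a) (succ_ne_zero b) h)
  rw [← cons_self_tail ψ, h0,
    v.orderEmbOfFin_unique (f := tail ψ) hv (fun k => hmaps (succ_ne_zero k)) hsucc]

end Fin

section Fsk

variable {m n : ℕ} [NeZero n]

theorem isFskMor_cons_bot_orderEmbOfFin {v : Finset (Fin n)} (hv : v.card = m)
    (ℓT : Fin n → Fin n) :
    IsFskMor (Fin.cons ⊥ (v.orderEmbOfFin hv)) {i : Fin (m + 1) | i ≠ 0}
      (fun i : Fin (m + 1) => if (i : ℕ) = m then i else 0) (↑v) ℓT := by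
  set φ : Fin (m + 1) → Fin n := Fin.cons ⊥ (v.orderEmbOfFin hv)
  have hmono : Monotone φ := Fin.monotone_cons_bot (v.orderEmbOfFin hv).monotone
  have hzero : φ 0 = 0 := by simp [φ, bot_eq_zero]
  have hsurj : SurjOn φ {i | i ≠ 0} v := fun b hb => by
    obtain ⟨k, rfl⟩ : b ∈ range (v.orderEmbOfFin hv) := by rwa [v.range_orderEmbOfFin hv]
    exact ⟨k.succ, Fin.succ_ne_zero k, by simp [φ]⟩
  have hbot : IsBot (φ ⊥) := fun _ => by simp [φ, bot_eq_zero]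
  obtain ⟨φs, gc, hφs, hleft, hright⟩ := hmono.exists_galoisConnection_invOn hbot
    Fin.isUpperSet_ne_zero (Fin.injOn_cons (v.orderEmbOfFin hv).injective) hsurj
  refine ⟨hmono, fun i hi => by rw [Fin.val_eq_zero_iff.mp hi, hzero, Fin.val_zero],
    ⟨φs, gc, ?_, hφs, hleft, hright⟩, fun j hj _ => ?_⟩
  · intro i hi
    obtain ⟨k, rfl⟩ := Fin.exists_succ_eq.mpr hi
    simp [φ]
  · have hjm : (j : ℕ) ≠ m := by omega
    simp [hjm, hzero]

theorem IsFskMor.eq_cons_bot_orderEmbOfFin {v : Finset (Fin n)} (hv : v.card = m)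
    {ℓS : Fin (m + 1) → Fin (m + 1)} {ℓT : Fin n → Fin n} {ψ : Fin (m + 1) → Fin n}
    (hψ : IsFskMor ψ {i | i ≠ 0} ℓS v ℓT) : ψ = Fin.cons ⊥ (v.orderEmbOfFin hv) := by
  obtain ⟨hmono, hzero, ⟨_, _, hmaps, _, hleft, _⟩, _⟩ := hψ
  exact Fin.eq_cons_bot_orderEmbOfFin hv hmono (Fin.ext (hzero 0 rfl))
    (LeftInvOn.injOn fun _ h => hleft _ h) fun _ h => hmaps _ h

end Fsk

theorem stmt13_general {m n : ℕ} (hn : 1 ≤ n)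
    (v : Finset (Fin n)) (hv : v.card = m)
    (ℓT : Fin n → Fin n) :
    ∃! φ : Fin (m + 1) → Fin n,
      IsFskMor φ {i : Fin (m + 1) | i ≠ 0}
        (fun i : Fin (m + 1) => if (i : ℕ) = m then i else 0)
        (↑v) ℓT := by
  have : NeZero n := ⟨by omega⟩
  exact ⟨_, isFskMor_cons_bot_orderEmbOfFin hv ℓT, fun _ hψ => hψ.eq_cons_bot_orderEmbOfFin hv⟩

/-- `(Fin (m+1), Fin (m+1) \ {0}, ⊥)` is initial among objects `(Fin n, v, ℓT)`
with `|v| = m`. -/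
theorem stmt13 {m n : ℕ} (hn : 1 ≤ n)
    (v : Finset (Fin n)) (hv : v.card = m)
    (ℓT : Fin n → Fin n) (hℓT : IsLbf ℓT) :
    ∃! φ : Fin (m + 1) → Fin n,
      IsFskMor φ {i : Fin (m + 1) | i ≠ 0}
        (fun i : Fin (m + 1) => if (i : ℕ) = m then i else 0)
        (↑v) ℓT :=
  stmt13_general hn v hv ℓT
end

section
/- Let m ≥ 0, let n ≥ 1, let v ⊆ Fin n have cardinality m, and let ℓ_T be a left bracketing function on Fin n. Let u = { i ∈ Fin(m+1) | i ≠ m } and let ℓ_⊤ be the identity function on Fin(m+1) (the greatest lbf on Fin(m+1)). Then there exists exactly one explicit Fsk-morphism φ from (Fin n, v, ℓ_T) to (Fin(m+1), u, ℓ_⊤). -/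
/-- A strictly monotone self-map of `Fin m` satisfies `k ≤ F k`. -/
lemma fin_strictMono_le_apply {m : ℕ} {F : Fin m → Fin m} (hF : StrictMono F) :
    ∀ (j : ℕ) (hj : j < m), j ≤ (F ⟨j, hj⟩ : ℕ) := by
  intro j
  induction j with
  | zero => intro hj; exact Nat.zero_le _
  | succ j ih =>
      intro hj
      have hj' : j < m := Nat.lt_of_succ_lt hj
      have h1 : F ⟨j, hj'⟩ < F ⟨j + 1, hj⟩ := hF (by simp [Fin.lt_def])
      have h1' : (F ⟨j, hj'⟩ : ℕ) < (F ⟨j + 1, hj⟩ : ℕ) := h1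
      have := ih hj'
      omega

/-- A strictly monotone self-map of `Fin m` is the identity. -/
lemma fin_strictMono_eq_id {m : ℕ} {F : Fin m → Fin m} (hF : StrictMono F) :
    ∀ k, F k = k := by
  have hbij : Function.Bijective F :=
    (Finite.injective_iff_bijective).mp hF.injective
  have hsurj := hbij.2
  let e : Fin m ≃o Fin m := StrictMono.orderIsoOfSurjective F hF hsurj
  have hG : StrictMono e.symm := e.symm.strictMono
  intro k
  have h1 : (k : ℕ) ≤ (F k : ℕ) := by
    have := fin_strictMono_le_apply hF k k.isLt
    simpa using this
  have h2 : ((F k : Fin m) : ℕ) ≤ (k : ℕ) := by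
    have h3 : ((F k : Fin m) : ℕ) ≤ (e.symm (F k) : ℕ) := by
      have := fin_strictMono_le_apply hG (F k) (F k).isLt
      simpa using this
    have h4 : e.symm (F k) = k := by
      have : e k = F k := rfl
      rw [← this, e.symm_apply_apply]
    rw [h4] at h3
    exact h3
  exact Fin.ext (le_antisymm h2 h1)

/-- `(Fin (m+1), Fin (m+1) \ {top}, ⊤)` is terminal among objects
`(Fin n, v, ℓT)` with `|v| = m`. -/
theorem stmt14 {m n : ℕ} (hn : 1 ≤ n)
    (v : Finset (Fin n)) (hv : v.card = m)
    (ℓT : Fin n → Fin n) (hℓT : IsLbf ℓT) :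
    ∃! φ : Fin n → Fin (m + 1),
      IsFskMor φ (↑v) ℓT
        {i : Fin (m + 1) | (i : ℕ) ≠ m}
        (id : Fin (m + 1) → Fin (m + 1)) := by
  classical
  set e : Fin m ↪o Fin n := v.orderEmbOfFin hv with he
  have hem : ∀ k, e k ∈ v := fun k => v.orderEmbOfFin_mem hv k
  have hesurj : ∀ x ∈ v, ∃ k, e k = x := by
    intro x hx
    have : x ∈ Set.range e := by rw [Finset.range_orderEmbOfFin]; exact hx
    exact this
  -- the candidate map
  have hcard : ∀ x : Fin n,
      (Finset.univ.filter (fun k : Fin m => e k < x)).card < m + 1 := by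
    intro x
    calc (Finset.univ.filter (fun k : Fin m => e k < x)).card
        ≤ Finset.univ.card := Finset.card_filter_le _ _
      _ = m := by simp
      _ < m + 1 := Nat.lt_succ_self m
  set φ : Fin n → Fin (m + 1) :=
    fun x => ⟨(Finset.univ.filter (fun k : Fin m => e k < x)).card, hcard x⟩ with hφ
  -- the candidate adjoint
  set φs : Fin (m + 1) → Fin n :=
    fun i => if h : (i : ℕ) < m then e ⟨i, h⟩ else ⟨n - 1, by omega⟩ with hφs
  -- key galois property
  have key : ∀ (x : Fin n) (i : ℕ) (hi : i < m),
      ((φ x : ℕ) ≤ i ↔ x ≤ e ⟨i, hi⟩) := by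
    intro x i hi
    constructor
    · intro h
      by_contra hlt
      push_neg at hlt
      have hsub : Finset.Iic (⟨i, hi⟩ : Fin m) ⊆
          Finset.univ.filter (fun k : Fin m => e k < x) := by
        intro k hk
        simp only [Finset.mem_Iic] at hk
        simp only [Finset.mem_filter, Finset.mem_univ, true_and]
        exact lt_of_le_of_lt (e.monotone hk) hlt
      have := Finset.card_le_card hsub
      rw [Fin.card_Iic] at this
      simp only [hφ] at h
      have hii : ((⟨i, hi⟩ : Fin m) : ℕ) = i := rfl
      rw [hii] at this
      omega
    · intro h
      have hsub : Finset.univ.filter (fun k : Fin m => e k < x) ⊆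
          Finset.Iio (⟨i, hi⟩ : Fin m) := by
        intro k hk
        simp only [Finset.mem_filter, Finset.mem_univ, true_and] at hk
        simp only [Finset.mem_Iio]
        exact e.strictMono.lt_iff_lt.mp (lt_of_lt_of_le hk h)
      have := Finset.card_le_card hsub
      rw [Fin.card_Iio] at this
      exact this
  have hφe : ∀ k : Fin m, (φ (e k) : ℕ) = (k : ℕ) := by
    intro k
    have : Finset.univ.filter (fun j : Fin m => e j < e k) = Finset.Iio k := by
      ext j
      simp [Finset.mem_Iio, e.strictMono.lt_iff_lt]
    simp only [hφ, this, Fin.card_Iio]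
  have hφmono : Monotone φ := by
    intro x y hxy
    simp only [hφ, Fin.mk_le_mk]
    apply Finset.card_le_card
    intro k hk
    simp only [Finset.mem_filter, Finset.mem_univ, true_and] at hk ⊢
    exact lt_of_lt_of_le hk hxy
  have hgal : ∀ (x : Fin n) (i : Fin (m + 1)), φ x ≤ i ↔ x ≤ φs i := by
    intro x i
    by_cases h : (i : ℕ) < m
    · rw [hφs]
      simp only [dif_pos h]
      rw [Fin.le_def]
      exact key x i h
    · have him : (i : ℕ) = m := by omega
      have h1 : φ x ≤ i := by
        rw [Fin.le_def, him]
        exact Nat.lt_succ_iff.mp (φ x).isLt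
      have h2 : x ≤ φs i := by
        rw [hφs]
        simp only [dif_neg h]
        rw [Fin.le_def]
        have := x.isLt
        simp only []
        omega
      simp [h1, h2]
  have hφMor : IsFskMor φ (↑v) ℓT
      {i : Fin (m + 1) | (i : ℕ) ≠ m} (id : Fin (m + 1) → Fin (m + 1)) := by
    refine ⟨hφmono, ?_, ⟨φs, hgal, ?_, ?_, ?_, ?_⟩, ?_⟩
    · intro i hi
      simp only [hφ]
      rw [Finset.card_eq_zero, Finset.filter_eq_empty_iff]
      intro k _
      rw [Fin.lt_def, hi]
      omega
    · intro x hx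
      obtain ⟨k, rfl⟩ := hesurj x hx
      show (φ (e k) : ℕ) ≠ m
      rw [hφe k]
      have h6 := k.isLt
      omega
    · intro i hi
      simp only [Set.mem_setOf_eq] at hi
      have h : (i : ℕ) < m := lt_of_le_of_ne (Nat.lt_succ_iff.mp i.isLt) hi
      rw [hφs]
      simp only [dif_pos h]
      exact hem _
    · intro x hx
      obtain ⟨k, rfl⟩ := hesurj x hx
      have hk : (φ (e k) : ℕ) < m := by rw [hφe k]; exact k.isLt
      rw [hφs]
      simp only [dif_pos hk]
      congr 1
      exact Fin.ext (hφe k)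
    · intro i hi
      simp only [Set.mem_setOf_eq] at hi
      have h : (i : ℕ) < m := lt_of_le_of_ne (Nat.lt_succ_iff.mp i.isLt) hi
      rw [hφs]
      simp only [dif_pos h]
      exact Fin.ext (hφe ⟨i, h⟩)
    · intro j hj hlt
      have h1 : φ (ℓT j) ≤ φ j := hφmono (hℓT.1 j)
      rw [Fin.le_def] at h1
      rw [Fin.lt_def] at hlt
      rw [Fin.le_def]
      show (φ (ℓT j) : ℕ) ≤ (φ ⟨(j : ℕ) + 1, hj⟩ : ℕ) - 1
      omega
  refine ⟨φ, hφMor, ?_⟩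
  -- uniqueness
  intro ψ hψ
  obtain ⟨hmono, hzero, ⟨ψs, gal, huv, hvu, hli, hri⟩, _⟩ := hψ
  -- ψ is strictly monotone on v
  have hsm : ∀ x ∈ v, ∀ y ∈ v, x < y → ψ x < ψ y := by
    intro x hx y hy hxy
    rcases lt_or_eq_of_le (hmono hxy.le) with h | h
    · exact h
    · exfalso
      have : x = y := by
        have h1 := hli x hx
        have h2 := hli y hy
        rw [← h1, ← h2, h]
      exact absurd this (ne_of_lt hxy)
  have hF : ∀ k : Fin m, (ψ (e k) : ℕ) < m := by
    intro k
    have := huv (e k) (hem k)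
    simp only [Set.mem_setOf_eq] at this
    exact lt_of_le_of_ne (Nat.lt_succ_iff.mp (ψ (e k)).isLt) this
  set F : Fin m → Fin m := fun k => ⟨(ψ (e k) : ℕ), hF k⟩ with hFdef
  have hFsm : StrictMono F := by
    intro k k' hkk'
    have := hsm (e k) (hem k) (e k') (hem k') (e.strictMono hkk')
    rw [Fin.lt_def] at this ⊢
    exact this
  have hFid : ∀ k, F k = k := fin_strictMono_eq_id hFsm
  have hψe : ∀ k : Fin m, (ψ (e k) : ℕ) = (k : ℕ) := by
    intro k
    have := hFid k
    rw [hFdef] at this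
    exact congrArg Fin.val this
  -- ψs = φs
  have hψs : ∀ i, ψs i = φs i := by
    intro i
    by_cases h : (i : ℕ) < m
    · have hψei : ψ (e ⟨i, h⟩) = i := by
        apply Fin.ext
        rw [hψe ⟨i, h⟩]
      have := hli (e ⟨i, h⟩) (hem ⟨i, h⟩)
      rw [hψei] at this
      rw [this, hφs]
      simp only [dif_pos h]
    · have h1 : (⟨n - 1, by omega⟩ : Fin n) ≤ ψs i := by
        rw [← gal]
        rw [Fin.le_def]
        have := (ψ ⟨n - 1, by omega⟩).isLt
        omega
      have h2 : ψs i ≤ (⟨n - 1, by omega⟩ : Fin n) := by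
        rw [Fin.le_def]
        have := (ψs i).isLt
        simp only []
        omega
      rw [hφs]
      simp only [dif_neg h]
      exact le_antisymm h2 h1
  funext x
  apply le_antisymm
  · rw [gal, hψs]
    rw [← hgal]
  · rw [hgal, ← hψs, ← gal]
end

section
/- Let m ≥ 1, let n ≥ 1, let v ⊆ Fin n have cardinality m, and let ℓ_T be a left bracketing function on Fin n. Let ℓ_⊥ be the bottom lbf on Fin m (ℓ_⊥(m−1) = m−1 and ℓ_⊥(i) = 0 for i < m−1). Then there exists an explicit Fsk-morphism φ from (Fin m, Fin m, ℓ_⊥) (with the full subset) to (Fin n, v, ℓ_T) if and only if 0 ∈ v; and when such a morphism exists, it is unique. -/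
lemma stmt15_aux_unique {m n : ℕ} (v : Finset (Fin n)) (hv : v.card = m)
    {ℓS : Fin m → Fin m} {ℓT : Fin n → Fin n} {φ : Fin m → Fin n}
    (h : IsFskMor φ (Set.univ : Set (Fin m)) ℓS (↑v) ℓT) :
    φ = ⇑(v.orderEmbOfFin hv) := by
  obtain ⟨hmono, h0, ⟨φs, hgc, huv, hvu, h1, h2⟩, hd⟩ := h
  have hinj : Function.Injective φ := by
    intro a b hab
    have := h1 a (Set.mem_univ _)
    rw [hab, h1 b (Set.mem_univ _)] at this
    exact this.symm
  exact Finset.orderEmbOfFin_unique hv (fun x => huv x (Set.mem_univ _))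
    (hmono.strictMono_of_injective hinj)

/-- there is a morphism from `(Fin m, Fin m, ⊥)` to `(Fin n, v, ℓT)` iff
`0 ∈ v`, and such a morphism is unique. -/
theorem stmt15 {m n : ℕ} (hm : 1 ≤ m) (hn : 1 ≤ n)
    (v : Finset (Fin n)) (hv : v.card = m)
    (ℓT : Fin n → Fin n) (hℓT : IsLbf ℓT) :
    ((∃ φ : Fin m → Fin n,
        IsFskMor φ (Set.univ : Set (Fin m))
          (fun i : Fin m => if (i : ℕ) = m - 1 then i else ⟨0, by omega⟩)
          (↑v) ℓT) ↔ (⟨0, by omega⟩ : Fin n) ∈ v) ∧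
    (∀ φ₁ φ₂ : Fin m → Fin n,
      IsFskMor φ₁ (Set.univ : Set (Fin m))
        (fun i : Fin m => if (i : ℕ) = m - 1 then i else ⟨0, by omega⟩) (↑v) ℓT →
      IsFskMor φ₂ (Set.univ : Set (Fin m))
        (fun i : Fin m => if (i : ℕ) = m - 1 then i else ⟨0, by omega⟩) (↑v) ℓT →
      φ₁ = φ₂) := by
  have key : ∀ φ : Fin m → Fin n,
      IsFskMor φ (Set.univ : Set (Fin m))
        (fun i : Fin m => if (i : ℕ) = m - 1 then i else ⟨0, by omega⟩) (↑v) ℓT →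
      φ = ⇑(v.orderEmbOfFin hv) := fun φ h => stmt15_aux_unique v hv h
  constructor
  · constructor
    · rintro ⟨φ, hφ⟩
      obtain ⟨hmono, h0, ⟨φs, hgc, huv, hvu, h1, h2⟩, hd⟩ := hφ
      have hmem := huv ⟨0, by omega⟩ (Set.mem_univ _)
      have : φ ⟨0, by omega⟩ = ⟨0, by omega⟩ := Fin.ext (h0 _ rfl)
      rwa [this] at hmem
    · intro h0v
      set e := v.orderEmbOfFin hv with he
      have hsm : StrictMono e := (v.orderEmbOfFin hv).strictMono
      have hmem : ∀ j, e j ∈ v := fun j => Finset.orderEmbOfFin_mem v hv j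
      obtain ⟨k, hk⟩ : ∃ k, e k = ⟨0, by omega⟩ := by
        have : (⟨0, by omega⟩ : Fin n) ∈ Set.range e := by
          rw [Finset.range_orderEmbOfFin]; exact_mod_cast h0v
        exact this
      have he0 : e ⟨0, by omega⟩ = ⟨0, by omega⟩ := by
        have h1 : e ⟨0, by omega⟩ ≤ e k := hsm.monotone (by
          simp [Fin.le_def])
        rw [hk] at h1
        exact le_antisymm h1 (by simp [Fin.le_def])
      refine ⟨e, hsm.monotone, ?_, ?_, ?_⟩
      · intro i hi
        have : i = ⟨0, by omega⟩ := Fin.ext hi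
        rw [this, he0]
      · have hne : ∀ j : Fin n, (Finset.univ.filter (fun i => e i ≤ j)).Nonempty := by
          intro j
          refine ⟨⟨0, by omega⟩, Finset.mem_filter.mpr ⟨Finset.mem_univ _, ?_⟩⟩
          rw [he0]
          exact Fin.le_def.mpr (Nat.zero_le _)
        refine ⟨fun j => (Finset.univ.filter (fun i => e i ≤ j)).max' (hne j), ?_, ?_, ?_, ?_, ?_⟩
        · intro i j
          constructor
          · intro hij
            exact Finset.le_max' _ i (by simpa using hij)
          · intro hij
            have hmax := Finset.max'_mem _ (hne j)
            simp only [Finset.mem_filter, Finset.mem_univ, true_and] at hmax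
            exact le_trans (hsm.monotone hij) hmax
        · exact fun j _ => hmem j
        · exact fun i _ => Set.mem_univ _
        · intro j _
          apply le_antisymm
          · by_contra hlt
            push_neg at hlt
            have hmax := Finset.max'_mem (Finset.univ.filter (fun i => e i ≤ e j)) (hne (e j))
            simp only [Finset.mem_filter, Finset.mem_univ, true_and] at hmax
            exact absurd hmax (not_le.mpr (hsm hlt))
          · exact Finset.le_max' _ j (by simp)
        · intro i hi
          obtain ⟨k', hk'⟩ : ∃ k', e k' = i := by
            have : i ∈ Set.range e := by
              rw [Finset.range_orderEmbOfFin]; exact_mod_cast hi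
            exact this
          subst hk'
          congr 1
          apply le_antisymm
          · by_contra hlt
            push_neg at hlt
            have hmax := Finset.max'_mem (Finset.univ.filter (fun i => e i ≤ e k')) (hne (e k'))
            simp only [Finset.mem_filter, Finset.mem_univ, true_and] at hmax
            exact absurd hmax (not_le.mpr (hsm hlt))
          · exact Finset.le_max' _ k' (by simp)
      · intro j hj _
        have hjne : (j : ℕ) ≠ m - 1 := by omega
        simp only [hjne, if_false]
        rw [he0]
        simp [Fin.le_def]
  · intro φ₁ φ₂ h1 h2
    rw [key φ₁ h1, key φ₂ h2]
end
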